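/- Let P be a polynomial function on Λ × ℤ_{>0} (λ, level k) that is anti-invariant, at each fixed level k, under both subgroups Σ_r^+ and Σ_r^- of the affine Weyl group of SU(r) acting at level k (defined as the stabilizers of the points θ₁[k] − v_det and θ_{−1}[k] − v_det respectively). If r > 2 then Σ_r^+ and Σ_r^- generate the full affine Weyl group Σ_r ⋉ (k+r)Λ, and consequently P ≡ 0. -/

import Mathlib

/-- Half-sum of positive roots: `ρ = (r−1, r−3, ..., 1−r)/2` (0-indexed: `ρ i = (r-1-2i)/2`). -/
noncomputable def rhoVec (r : ℕ) : Fin r → ℝ := fun i => ((r : ℝ) - 1 - 2 * (i : ℝ)) / 2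

/-- The affine Weyl action `λ ↦ σ(λ+ρ+v) − ρ − v + (k+r)γ` at level `k`,
where `σ` permutes coordinates and `γ` is a lattice translation. -/
def affAct (r k : ℕ) (ρ v : Fin r → ℝ) (σ : Equiv.Perm (Fin r)) (γ : Fin r → ℤ) :
    Function.End (Fin r → ℝ) :=
  fun x i => (x (σ.symm i) + ρ (σ.symm i) + v (σ.symm i)) - ρ i - v i + ((k : ℝ) + r) * γ i

/-- The special point `θ₁[k] = (k+r)(1,...,1)/r − (k+r)x_r − ρ`. -/
noncomputable def thetaPlus (r k : ℕ) : Fin r → ℝ :=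
  fun i => ((k : ℝ) + r) / r - (if (i : ℕ) = r - 1 then (k : ℝ) + r else 0) - rhoVec r i

/-- The special point `θ_{−1}[k] = −(k+r)(1,...,1)/r + (k+r)x₁ − ρ`. -/
noncomputable def thetaMinus (r k : ℕ) : Fin r → ℝ :=
  fun i => -(((k : ℝ) + r) / r) + (if (i : ℕ) = 0 then (k : ℝ) + r else 0) - rhoVec r i

/-- The stabilizer of the point `θ` inside the affine Weyl group at level `k`, as a set
of self-maps of `ℝ^r`. -/
def stabSet (r k : ℕ) (v θ : Fin r → ℝ) : Set (Function.End (Fin r → ℝ)) :=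
  {f | ∃ σ : Equiv.Perm (Fin r), ∃ γ : Fin r → ℤ, (∑ i, γ i) = 0 ∧
    f = affAct r k (rhoVec r) v σ γ ∧ affAct r k (rhoVec r) v σ γ θ = θ}

/-!
For every permutation `σ`, the stabilizer of `θ₊ − v` contains the element with linear part `σ`
and translation part `e_{σ(r)} − e_r`, and the stabilizer of `θ₋ − v` the one with linear part `σ`
and translation part `e_1 − e_{σ(1)}`. The product of one of each kind, with linear parts `σ` and
`σ⁻¹`, is the pure translation by `±(e_{σ(r)} + e_{σ(1)} − e_r − e_1)`. Routing both through a
third index (this is where `r > 2` enters) gives every translation by `e_a − e_b`, hence all of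
`(k+r)Λ`, and then the whole affine Weyl group.

Consequently `P k` is invariant under `(k+r)Λ` and anti-invariant under the reflection swapping
the first two coordinates, which fixes `θ₊` because `r > 2`. Every point of a hyperplane
`x₁ − x₂ = c + (k+r)m` is fixed by a translate of that reflection, so `P k` vanishes on infinitely
many parallel hyperplanes, and being polynomial it vanishes identically.
-/

lemma Pi.single_comp_perm_symm {ι M : Type*} [DecidableEq ι] [Zero M] (σ : Equiv.Perm ι)
    (a : ι) (m : M) : Pi.single a m ∘ σ.symm = Pi.single (σ a) m := by
  funext i
  simp [Pi.single_apply, Equiv.symm_apply_eq]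

lemma Equiv.Perm.exists_apply_eq_apply_eq {α : Type*} [DecidableEq α] {x₁ x₂ y₁ y₂ : α}
    (hx : x₁ ≠ x₂) (hy : y₁ ≠ y₂) : ∃ σ : Equiv.Perm α, σ x₁ = y₁ ∧ σ x₂ = y₂ := by
  refine ⟨Equiv.swap (Equiv.swap x₁ y₁ x₂) y₂ * Equiv.swap x₁ y₁, ?_, ?_⟩
  · have hne : y₁ ≠ Equiv.swap x₁ y₁ x₂ := fun h =>
      hx ((Equiv.swap x₁ y₁).injective ((Equiv.swap_apply_left x₁ y₁).trans h))
    rw [Equiv.Perm.mul_apply, Equiv.swap_apply_left, Equiv.swap_apply_of_ne_of_ne hne hy]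
  · rw [Equiv.Perm.mul_apply, Equiv.swap_apply_left]

lemma MvPolynomial.eval_eq_zero_of_infinite_setOf_eval_update {ι R : Type*} [CommRing R]
    [IsDomain R] [DecidableEq ι] (p : MvPolynomial ι R) (x : ι → R) (a : ι)
    (h : {t | eval (Function.update x a t) p = 0}.Infinite) : eval x p = 0 := by
  have hq : ∀ t, (aeval (Function.update (fun j => Polynomial.C (x j)) a Polynomial.X) p).eval t
      = eval (Function.update x a t) p := by
    intro t
    rw [aeval_def, polynomial_eval_eval₂]
    congr 1
    · ext; simp
    · funext j
      by_cases hj : j = a <;> simp [hj]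
  have hq0 := Polynomial.eq_zero_of_infinite_isRoot _ (h.mono fun t ht => by
    rwa [Set.mem_ofPred_eq, Polynomial.IsRoot, hq])
  have := hq (x a)
  rwa [Function.update_eq_self, hq0, Polynomial.eval_zero, eq_comm] at this

lemma sum_single_sub_single {ι M : Type*} [Fintype ι] [DecidableEq ι] [AddCommGroup M]
    (a b : ι) (m : M) : ∑ i, (Pi.single a m - Pi.single b m : ι → M) i = 0 := by
  simp [Finset.sum_sub_distrib]

lemma AddSubmonoid.mem_of_sum_eq_zero {ι : Type*} [Fintype ι] [DecidableEq ι]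
    (S : AddSubmonoid (ι → ℤ)) (hS : ∀ a b, Pi.single a 1 - Pi.single b 1 ∈ S)
    {γ : ι → ℤ} (hγ : ∑ i, γ i = 0) : γ ∈ S := by
  rcases isEmpty_or_nonempty ι with hι | ⟨⟨i₀⟩⟩
  · simpa only [Subsingleton.elim γ 0] using S.zero_mem
  have hdecomp : γ = ∑ i, γ i • (Pi.single i 1 - Pi.single i₀ 1) := by
    funext j
    simp [Finset.sum_apply, Pi.single_apply, mul_sub, Finset.sum_sub_distrib, hγ]
  rw [hdecomp]
  refine S.sum_mem fun i _ => ?_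
  obtain ⟨m, hm | hm⟩ := Int.eq_nat_or_neg (γ i) <;> rw [hm]
  · rw [natCast_zsmul]
    exact S.nsmul_mem (hS i i₀) m
  · rw [neg_smul, ← smul_neg, neg_sub, natCast_zsmul]
    exact S.nsmul_mem (hS i₀ i) m

lemma exists_ne_ne_of_two_lt_card {α : Type*} [Fintype α] [DecidableEq α]
    (h : 2 < Fintype.card α) (a b : α) : ∃ c, a ≠ c ∧ b ≠ c := by
  have hcard : ({a, b} : Finset α).card < Finset.univ.card :=
    Finset.card_le_two.trans_lt (h.trans_eq Finset.card_univ.symm)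
  obtain ⟨c, -, hc⟩ := Finset.exists_mem_notMem_of_card_lt_card hcard
  simp only [Finset.mem_insert, Finset.mem_singleton, not_or] at hc
  exact ⟨c, Ne.symm hc.1, Ne.symm hc.2⟩

section AffineAction

variable {r : ℕ} (k : ℕ) (ρ v : Fin r → ℝ)

lemma affAct_mul (σ τ : Equiv.Perm (Fin r)) (γ δ : Fin r → ℤ) :
    affAct r k ρ v σ γ * affAct r k ρ v τ δ = affAct r k ρ v (σ * τ) (γ + δ ∘ σ.symm) := by
  funext x i
  change affAct r k ρ v σ γ (affAct r k ρ v τ δ x) i = _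
  simp only [affAct, Equiv.Perm.mul_def, Equiv.symm_trans_apply, Pi.add_apply,
    Function.comp_apply]
  push_cast
  ring

lemma affAct_one_mul (σ : Equiv.Perm (Fin r)) (γ δ : Fin r → ℤ) :
    affAct r k ρ v 1 γ * affAct r k ρ v σ δ = affAct r k ρ v σ (γ + δ) := by
  rw [affAct_mul, one_mul, Equiv.Perm.one_def, Equiv.refl_symm, Equiv.coe_refl, Function.comp_id]

lemma affAct_one_apply (γ : Fin r → ℤ) (x : Fin r → ℝ) (i : Fin r) :
    affAct r k ρ v 1 γ x i = x i + ((k : ℝ) + r) * γ i := by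
  simp only [affAct, Equiv.Perm.one_def, Equiv.refl_symm, Equiv.refl_apply]
  ring

lemma affAct_one_zero : affAct r k ρ v 1 0 = 1 := by
  funext x i
  simp [affAct_one_apply, Function.End.one_def]

lemma affAct_sub_affAct_zero (σ : Equiv.Perm (Fin r)) (γ : Fin r → ℤ) (x : Fin r → ℝ) :
    affAct r k ρ v σ γ x - affAct r k ρ v σ γ 0 = x ∘ σ.symm := by
  funext i
  simp only [affAct, Pi.sub_apply, Pi.zero_apply, Function.comp_apply]
  ring

lemma perm_eq_of_affAct_eq {σ τ : Equiv.Perm (Fin r)} {γ δ : Fin r → ℤ}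
    (h : affAct r k ρ v σ γ = affAct r k ρ v τ δ) : σ = τ := by
  have hval : (fun j : Fin r => (j : ℝ)) ∘ σ.symm = (fun j : Fin r => (j : ℝ)) ∘ τ.symm := by
    rw [← affAct_sub_affAct_zero k ρ v σ γ, h, affAct_sub_affAct_zero]
  refine Equiv.symm_bijective.injective (Equiv.ext fun i => Fin.ext ?_)
  simpa using congrFun hval i

def translationSubmonoid (M : Submonoid (Function.End (Fin r → ℝ))) :
    AddSubmonoid (Fin r → ℤ) where
  carrier := {γ | affAct r k ρ v 1 γ ∈ M}
  add_mem' {γ δ} hγ hδ := by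
    simpa only [Set.mem_ofPred_eq, affAct_one_mul] using M.mul_mem hγ hδ
  zero_mem' := by
    simpa only [Set.mem_ofPred_eq, affAct_one_zero] using M.one_mem

lemma mem_translationSubmonoid {M : Submonoid (Function.End (Fin r → ℝ))} {γ : Fin r → ℤ} :
    γ ∈ translationSubmonoid k ρ v M ↔ affAct r k ρ v 1 γ ∈ M :=
  Iff.rfl

def antiInvariantSubmonoid (Q : (Fin r → ℝ) → ℝ) : Submonoid (Function.End (Fin r → ℝ)) where
  carrier := {f | ∃ σ γ, f = affAct r k ρ v σ γ ∧ ∀ x, Q (f x) = (Equiv.Perm.sign σ : ℤ) * Q x}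
  mul_mem' := by
    rintro _ _ ⟨σ, γ, rfl, hσ⟩ ⟨τ, δ, rfl, hτ⟩
    refine ⟨σ * τ, _, affAct_mul k ρ v σ τ γ δ, fun x => ?_⟩
    change Q (affAct r k ρ v σ γ (affAct r k ρ v τ δ x)) = _
    rw [hσ, hτ, Equiv.Perm.sign_mul]
    push_cast
    ring
  one_mem' := ⟨1, 0, (affAct_one_zero k ρ v).symm, by simp [Function.End.one_def]⟩

lemma affAct_mul_inv (σ : Equiv.Perm (Fin r)) (γ δ : Fin r → ℤ) :
    affAct r k ρ v σ γ * affAct r k ρ v σ⁻¹ δ = affAct r k ρ v 1 (γ + δ ∘ σ.symm) := by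
  rw [affAct_mul, mul_inv_cancel]

lemma apply_affAct_one_eq_of_mem {Q : (Fin r → ℝ) → ℝ} {γ : Fin r → ℤ}
    (h : affAct r k ρ v 1 γ ∈ antiInvariantSubmonoid k ρ v Q) (x : Fin r → ℝ) :
    Q (affAct r k ρ v 1 γ x) = Q x := by
  obtain ⟨σ, δ, heq, hQ⟩ := h
  obtain rfl := perm_eq_of_affAct_eq k ρ v heq
  simpa using hQ x

end AffineAction

section Stabilizers

variable {n : ℕ} (k : ℕ) (v : Fin (n + 1) → ℝ)

local notation "𝓜" => Submonoid.closure (stabSet (n + 1) k v (thetaPlus (n + 1) k - v) ∪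
  stabSet (n + 1) k v (thetaMinus (n + 1) k - v))

/- `θ₊ + ρ = (k+r)(𝟙/r − e_last)`: `σ` moves the dip at `last` to `σ last`, and the translation
moves it back. -/
lemma affAct_fixes_thetaPlus (σ : Equiv.Perm (Fin (n + 1))) :
    affAct (n + 1) k (rhoVec (n + 1)) v σ
      (Pi.single (σ (Fin.last n)) 1 - Pi.single (Fin.last n) 1) (thetaPlus (n + 1) k - v) =
      thetaPlus (n + 1) k - v := by
  have hlast : ∀ j : Fin (n + 1), (j : ℕ) = n + 1 - 1 ↔ j = Fin.last n := fun j => by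
    simp [Fin.ext_iff]
  funext i
  simp only [affAct, Pi.sub_apply, thetaPlus, hlast, Pi.single_apply, Equiv.symm_apply_eq]
  split_ifs <;> push_cast <;> ring

lemma affAct_fixes_thetaMinus (σ : Equiv.Perm (Fin (n + 1))) :
    affAct (n + 1) k (rhoVec (n + 1)) v σ (Pi.single 0 1 - Pi.single (σ 0) 1)
      (thetaMinus (n + 1) k - v) = thetaMinus (n + 1) k - v := by
  have hzero : ∀ j : Fin (n + 1), (j : ℕ) = 0 ↔ j = 0 := fun j => by
    rw [Fin.ext_iff, Fin.val_zero]
  funext i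
  simp only [affAct, Pi.sub_apply, thetaMinus, hzero, Pi.single_apply, Equiv.symm_apply_eq]
  split_ifs <;> push_cast <;> ring

lemma affAct_mem_closure_of_thetaPlus (σ : Equiv.Perm (Fin (n + 1))) :
    affAct (n + 1) k (rhoVec (n + 1)) v σ
      (Pi.single (σ (Fin.last n)) 1 - Pi.single (Fin.last n) 1) ∈ 𝓜 :=
  Submonoid.subset_closure
    (Or.inl ⟨σ, _, sum_single_sub_single _ _ _, rfl, affAct_fixes_thetaPlus k v σ⟩)

lemma affAct_mem_closure_of_thetaMinus (σ : Equiv.Perm (Fin (n + 1))) :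
    affAct (n + 1) k (rhoVec (n + 1)) v σ (Pi.single 0 1 - Pi.single (σ 0) 1) ∈ 𝓜 :=
  Submonoid.subset_closure
    (Or.inr ⟨σ, _, sum_single_sub_single _ _ _, rfl, affAct_fixes_thetaMinus k v σ⟩)

lemma perm_shift_mem_translationSubmonoid (σ : Equiv.Perm (Fin (n + 1))) :
    Pi.single (σ (Fin.last n)) 1 + Pi.single (σ 0) 1 - Pi.single (Fin.last n) 1 - Pi.single 0 1 ∈
      translationSubmonoid k (rhoVec (n + 1)) v 𝓜 := by
  have h := (𝓜).mul_mem (affAct_mem_closure_of_thetaPlus k v σ)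
    (affAct_mem_closure_of_thetaMinus k v σ⁻¹)
  rw [affAct_mul_inv] at h
  rw [mem_translationSubmonoid]
  convert h using 2
  rw [Pi.sub_comp, Pi.single_comp_perm_symm, Pi.single_comp_perm_symm, Equiv.Perm.coe_inv,
    Equiv.apply_symm_apply]
  abel

lemma neg_perm_shift_mem_translationSubmonoid (σ : Equiv.Perm (Fin (n + 1))) :
    Pi.single (Fin.last n) 1 + Pi.single 0 1 - Pi.single (σ (Fin.last n)) 1 - Pi.single (σ 0) 1 ∈
      translationSubmonoid k (rhoVec (n + 1)) v 𝓜 := by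
  have h := (𝓜).mul_mem (affAct_mem_closure_of_thetaMinus k v σ)
    (affAct_mem_closure_of_thetaPlus k v σ⁻¹)
  rw [affAct_mul_inv] at h
  rw [mem_translationSubmonoid]
  convert h using 2
  rw [Pi.sub_comp, Pi.single_comp_perm_symm, Pi.single_comp_perm_symm, Equiv.Perm.coe_inv,
    Equiv.apply_symm_apply]
  abel

-- `e_a − e_b = (e_a + e_c − e_last − e_0) + (e_last + e_0 − e_b − e_c)` for a third index `c`.
lemma single_sub_single_mem_translationSubmonoid (hn : 2 ≤ n) (a b : Fin (n + 1)) :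
    Pi.single a 1 - Pi.single b 1 ∈ translationSubmonoid k (rhoVec (n + 1)) v 𝓜 := by
  have hl0 : Fin.last n ≠ 0 := Fin.ne_of_val_ne (by rw [Fin.val_last, Fin.val_zero]; omega)
  obtain ⟨c, hac, hbc⟩ := exists_ne_ne_of_two_lt_card (by rw [Fintype.card_fin]; omega) a b
  obtain ⟨σ, hσl, hσ0⟩ := Equiv.Perm.exists_apply_eq_apply_eq hl0 hac
  obtain ⟨τ, hτl, hτ0⟩ := Equiv.Perm.exists_apply_eq_apply_eq hl0 hbc
  have h := add_mem (perm_shift_mem_translationSubmonoid k v σ)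
    (neg_perm_shift_mem_translationSubmonoid k v τ)
  rw [hσl, hσ0, hτl, hτ0] at h
  convert h using 1
  abel

lemma affAct_swap_fixes_thetaPlus (hn : 2 ≤ n) :
    affAct (n + 1) k (rhoVec (n + 1)) v (Equiv.swap 0 1) 0 (thetaPlus (n + 1) k - v) =
      thetaPlus (n + 1) k - v := by
  have hval1 : ((1 : Fin (n + 1)) : ℕ) = 1 := by rw [Fin.val_one', Nat.mod_eq_of_lt (by omega)]
  have hlast : Equiv.swap 0 1 (Fin.last n) = Fin.last n :=
    Equiv.swap_apply_of_ne_of_ne (Fin.ne_of_val_ne (by rw [Fin.val_last, Fin.val_zero]; omega))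
      (Fin.ne_of_val_ne (by rw [Fin.val_last, hval1]; omega))
  simpa only [hlast, sub_self] using affAct_fixes_thetaPlus k v (Equiv.swap 0 1)

theorem affAct_mem_closure_stabSet (hn : 2 ≤ n) (σ : Equiv.Perm (Fin (n + 1)))
    (γ : Fin (n + 1) → ℤ) (hγ : ∑ i, γ i = 0) :
    affAct (n + 1) k (rhoVec (n + 1)) v σ γ ∈ 𝓜 := by
  set shift : Fin (n + 1) → ℤ := Pi.single (σ (Fin.last n)) 1 - Pi.single (Fin.last n) 1
  have htrans : γ - shift ∈ translationSubmonoid k (rhoVec (n + 1)) v 𝓜 :=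
    AddSubmonoid.mem_of_sum_eq_zero _ (single_sub_single_mem_translationSubmonoid k v hn)
      (by simp [Finset.sum_sub_distrib, hγ, shift])
  have h := (𝓜).mul_mem htrans (affAct_mem_closure_of_thetaPlus k v σ)
  rwa [affAct_one_mul, sub_add_cancel] at h

end Stabilizers

section Vanishing

variable {r : ℕ} (k : ℕ) (ρ v : Fin r → ℝ)

lemma affAct_translate_swap_eq_self {a b : Fin r} (hab : a ≠ b) (m : ℕ) {x : Fin r → ℝ}
    (hx : x a = x b + (ρ b + v b) - (ρ a + v a) + ((k : ℝ) + r) * m) :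
    affAct r k ρ v 1 (m • (Pi.single a 1 - Pi.single b 1))
      (affAct r k ρ v (Equiv.swap a b) 0 x) = x := by
  funext i
  rw [affAct_one_apply]
  simp only [affAct, Equiv.symm_swap, Pi.zero_apply, Int.cast_zero, mul_zero, add_zero,
    Pi.smul_apply, Pi.sub_apply, Pi.single_apply]
  rcases eq_or_ne i a with rfl | hia
  · simp [hab, hx]
    ring
  rcases eq_or_ne i b with rfl | hib
  · simp [hia, hx]
    ring
  · simp [Equiv.swap_apply_of_ne_of_ne hia hib, hia, hib]
    ring

lemma eq_zero_of_mem_hyperplane {Q : (Fin r → ℝ) → ℝ} {a b : Fin r} (hab : a ≠ b)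
    (hswap : ∀ x, Q (affAct r k ρ v (Equiv.swap a b) 0 x) = -Q x)
    (htrans : ∀ (m : ℕ) x, Q (affAct r k ρ v 1 (m • (Pi.single a 1 - Pi.single b 1)) x) = Q x)
    (m : ℕ) {x : Fin r → ℝ}
    (hx : x a = x b + (ρ b + v b) - (ρ a + v a) + ((k : ℝ) + r) * m) : Q x = 0 := by
  have h : Q x = -Q x := by
    conv_lhs => rw [← affAct_translate_swap_eq_self k ρ v hab m hx]
    rw [htrans, hswap]
  linarith

theorem eq_zero_of_antiInvariant_swap {Q : (Fin r → ℝ) → ℝ}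
    (hQ : ∃ p : MvPolynomial (Fin r) ℝ, ∀ x, Q x = MvPolynomial.eval x p) {a b : Fin r}
    (hab : a ≠ b) (hswap : ∀ x, Q (affAct r k ρ v (Equiv.swap a b) 0 x) = -Q x)
    (htrans : ∀ (m : ℕ) x, Q (affAct r k ρ v 1 (m • (Pi.single a 1 - Pi.single b 1)) x) = Q x)
    (x : Fin r → ℝ) : Q x = 0 := by
  obtain ⟨p, hp⟩ := hQ
  have hpos : (0 : ℝ) < k + r := by
    have := Fin.pos a
    positivity
  rw [hp]
  refine MvPolynomial.eval_eq_zero_of_infinite_setOf_eval_update p x a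
    (Set.infinite_of_injective_forall_mem
      (f := fun m : ℕ => x b + (ρ b + v b) - (ρ a + v a) + ((k : ℝ) + r) * m) ?_ fun m => ?_)
  · intro m₁ m₂ h
    simpa [hpos.ne'] using h
  · rw [Set.mem_ofPred_eq, ← hp]
    exact eq_zero_of_mem_hyperplane k ρ v hab hswap htrans m
      (by simp [Function.update_of_ne hab.symm])

end Vanishing

theorem stmt5_general (r : ℕ) (hr : 2 < r) (v : Fin r → ℝ)
    (P : ℕ → (Fin r → ℝ) → ℝ)
    (hPpoly : ∀ k, 0 < k → ∃ p : MvPolynomial (Fin r) ℝ, ∀ x, P k x = MvPolynomial.eval x p)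
    (hplus : ∀ k, 0 < k → ∀ σ : Equiv.Perm (Fin r), ∀ γ : Fin r → ℤ, (∑ i, γ i) = 0 →
      affAct r k (rhoVec r) v σ γ (thetaPlus r k - v) = thetaPlus r k - v →
      ∀ x, P k (affAct r k (rhoVec r) v σ γ x) = ((Equiv.Perm.sign σ : ℤ) : ℝ) * P k x)
    (hminus : ∀ k, 0 < k → ∀ σ : Equiv.Perm (Fin r), ∀ γ : Fin r → ℤ, (∑ i, γ i) = 0 →
      affAct r k (rhoVec r) v σ γ (thetaMinus r k - v) = thetaMinus r k - v →
      ∀ x, P k (affAct r k (rhoVec r) v σ γ x) = ((Equiv.Perm.sign σ : ℤ) : ℝ) * P k x) :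
    (∀ k, 0 < k → ∀ σ : Equiv.Perm (Fin r), ∀ γ : Fin r → ℤ, (∑ i, γ i) = 0 →
      affAct r k (rhoVec r) v σ γ ∈
        Submonoid.closure (stabSet r k v (thetaPlus r k - v) ∪
          stabSet r k v (thetaMinus r k - v))) ∧
    (∀ k, 0 < k → ∀ x, P k x = 0) := by
  obtain ⟨n, rfl⟩ : ∃ n, r = n + 1 := ⟨r - 1, by omega⟩
  have hn : 2 ≤ n := by omega
  refine ⟨fun k _ σ γ hγ => affAct_mem_closure_stabSet k v hn σ γ hγ, fun k hk => ?_⟩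
  have hanti : Submonoid.closure (stabSet (n + 1) k v (thetaPlus (n + 1) k - v) ∪
      stabSet (n + 1) k v (thetaMinus (n + 1) k - v)) ≤
        antiInvariantSubmonoid k (rhoVec (n + 1)) v (P k) := by
    refine Submonoid.closure_le.2 (Set.union_subset ?_ ?_)
    · rintro _ ⟨σ, γ, hγ, rfl, hfix⟩
      exact ⟨σ, γ, rfl, hplus k hk σ γ hγ hfix⟩
    · rintro _ ⟨σ, γ, hγ, rfl, hfix⟩
      exact ⟨σ, γ, rfl, hminus k hk σ γ hγ hfix⟩
  have h01 : (0 : Fin (n + 1)) ≠ 1 := by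
    rw [Ne, Fin.ext_iff, Fin.val_zero, Fin.val_one', Nat.mod_eq_of_lt (by omega)]
    omega
  refine eq_zero_of_antiInvariant_swap k (rhoVec (n + 1)) v (hPpoly k hk) h01 (fun x => ?_)
    (fun m x => apply_affAct_one_eq_of_mem k _ v
      (hanti (affAct_mem_closure_stabSet k v hn 1 _ ?_)) x)
  · rw [hplus k hk _ 0 (by simp) (affAct_swap_fixes_thetaPlus k v hn) x,
      Equiv.Perm.sign_swap h01]
    simp
  · simp only [Pi.smul_apply, ← Finset.smul_sum, sum_single_sub_single, smul_zero]

/-- let `P` be a polynomial function on `Λ × ℤ_{>0}` which at each fixed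
level `k` is anti-invariant under both stabilizer subgroups `Σ_r^± ⊆` affine Weyl group
(the stabilizers of `θ₁[k] − v_det` and `θ_{−1}[k] − v_det`).  If `r > 2` then `Σ_r^+`
and `Σ_r^-` generate the full affine Weyl group `Σ_r ⋉ (k+r)Λ` (every affine Weyl
element is a composition of stabilizer elements), and consequently `P ≡ 0`. -/
theorem stmt5 (r : ℕ) (hr : 2 < r) (v : Fin r → ℝ) (hv : ∑ i, v i = 0)
    (P : ℕ → (Fin r → ℝ) → ℝ)
    (hPpoly : ∀ k, 0 < k → ∃ p : MvPolynomial (Fin r) ℝ, ∀ x, P k x = MvPolynomial.eval x p)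
    (hplus : ∀ k, 0 < k → ∀ σ : Equiv.Perm (Fin r), ∀ γ : Fin r → ℤ, (∑ i, γ i) = 0 →
      affAct r k (rhoVec r) v σ γ (thetaPlus r k - v) = thetaPlus r k - v →
      ∀ x, P k (affAct r k (rhoVec r) v σ γ x) = ((Equiv.Perm.sign σ : ℤ) : ℝ) * P k x)
    (hminus : ∀ k, 0 < k → ∀ σ : Equiv.Perm (Fin r), ∀ γ : Fin r → ℤ, (∑ i, γ i) = 0 →
      affAct r k (rhoVec r) v σ γ (thetaMinus r k - v) = thetaMinus r k - v →
      ∀ x, P k (affAct r k (rhoVec r) v σ γ x) = ((Equiv.Perm.sign σ : ℤ) : ℝ) * P k x) :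
    (∀ k, 0 < k → ∀ σ : Equiv.Perm (Fin r), ∀ γ : Fin r → ℤ, (∑ i, γ i) = 0 →
      affAct r k (rhoVec r) v σ γ ∈
        Submonoid.closure (stabSet r k v (thetaPlus r k - v) ∪
          stabSet r k v (thetaMinus r k - v))) ∧
    (∀ k, 0 < k → ∀ x, P k x = 0) :=
  stmt5_general r hr v P hPpoly hplus hminus
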